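/- arXiv:1806.00763 — 2 statements merged into one kernel-verified Lean document; each statement's English description precedes it below -/
import Mathlib

section
/- If M is a subset of the open quadrant Q = ]0,∞[^d that is convex and downward closed within Q (i.e. whenever y ∈ M and x ∈ Q satisfies x_j ≤ y_j for all j, then x ∈ M), then M is m-convex; equivalently, Log '' M is convex. -/
open Real

/-- `Log y = (log y₁, …, log y_d)` componentwise. -/
noncomputable def Log (d : ℕ) (y : Fin d → ℝ) : Fin d → ℝ := fun j => Real.log (y j)

/-- The open quadrant `Q = ]0,∞[^d`. -/
def Quadrant (d : ℕ) : Set (Fin d → ℝ) := {x | ∀ j, 0 < x j}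

theorem mConvex_of_convex_downward_closed (d : ℕ) (M : Set (Fin d → ℝ))
    (hM : M ⊆ Quadrant d) (hconv : Convex ℝ M)
    (hdown : ∀ y ∈ M, ∀ x ∈ Quadrant d, (∀ j, x j ≤ y j) → x ∈ M) :
    (∀ x ∈ M, ∀ y ∈ M, ∀ t : ℝ, 0 < t → t < 1 →
      (fun j => x j ^ t * y j ^ (1 - t)) ∈ M) ∧ Convex ℝ (Log d '' M) := by
  have key : ∀ x ∈ M, ∀ y ∈ M, ∀ t : ℝ, 0 < t → t < 1 →
      (fun j => x j ^ t * y j ^ (1 - t)) ∈ M := by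
    intro x hx y hy t ht ht1
    have hxQ := hM hx; have hyQ := hM hy
    have hQ : (fun j => x j ^ t * y j ^ (1 - t)) ∈ Quadrant d := fun j =>
      mul_pos (Real.rpow_pos_of_pos (hxQ j) t) (Real.rpow_pos_of_pos (hyQ j) (1 - t))
    have hcomb : t • x + (1 - t) • y ∈ M :=
      hconv hx hy ht.le (by linarith) (by ring)
    refine hdown _ hcomb _ hQ fun j => ?_
    have h := Real.geom_mean_le_arith_mean2_weighted ht.le
      (by linarith : (0:ℝ) ≤ 1 - t) (hxQ j).le (hyQ j).le (by ring)
    simpa using h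
  refine ⟨key, ?_⟩
  rintro _ ⟨x, hx, rfl⟩ _ ⟨y, hy, rfl⟩ s t hs ht hst
  rcases eq_or_lt_of_le hs with h | hs'
  · have h1 : t = 1 := by linarith
    subst h1
    refine ⟨y, hy, ?_⟩
    simp [← h]
  rcases eq_or_lt_of_le ht with h | ht'
  · have h1 : s = 1 := by linarith
    subst h1
    refine ⟨x, hx, ?_⟩
    simp [← h]
  · have ht1 : t = 1 - s := by linarith
    refine ⟨fun j => x j ^ s * y j ^ (1 - s), key x hx y hy s hs' (by linarith), ?_⟩
    funext j
    have hx0 := hM hx j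
    have hy0 := hM hy j
    simp only [Log, Pi.add_apply, Pi.smul_apply, smul_eq_mul]
    rw [Real.log_mul (Real.rpow_pos_of_pos hx0 s).ne' (Real.rpow_pos_of_pos hy0 (1-s)).ne',
      Real.log_rpow hx0, Real.log_rpow hy0, ht1]
end

section
/- (Lemma 2 of the paper.) If M is a subset of the open quadrant Q = ]0,∞[^d that is strictly convex (StrictConvex ℝ M) and downward closed within Q (i.e. whenever y ∈ M and x ∈ Q satisfies x_j ≤ y_j for all j, then x ∈ M), then M is strictly m-convex; that is, Log '' M is strictly convex (StrictConvex ℝ (Log '' M)). -/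
open Real

lemma quadrant_open (d : ℕ) : IsOpen (Quadrant d) := by
  have : Quadrant d = Set.pi Set.univ (fun _ : Fin d => Set.Ioi (0:ℝ)) := by
    ext x; simp [Quadrant, Set.mem_pi]
  rw [this]
  exact isOpen_set_pi Set.finite_univ (fun _ _ => isOpen_Ioi)

lemma mem_interior_of_le (d : ℕ) (M : Set (Fin d → ℝ))
    (hdown : ∀ y ∈ M, ∀ x ∈ Quadrant d, (∀ j, x j ≤ y j) → x ∈ M)
    {m z : Fin d → ℝ} (hm : m ∈ interior M) (hz : z ∈ Quadrant d)
    (hle : ∀ j, z j ≤ m j) : z ∈ interior M := by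
  rw [mem_interior_iff_mem_nhds, Metric.mem_nhds_iff] at hm ⊢
  obtain ⟨ε, hε, hball⟩ := hm
  obtain ⟨δ₁, hδ₁, hQ⟩ := Metric.isOpen_iff.mp (quadrant_open d) z hz
  refine ⟨min (ε/2) δ₁, by positivity, fun w hw => ?_⟩
  have hwQ : w ∈ Quadrant d := hQ (Metric.mem_ball.mpr (lt_of_lt_of_le hw (min_le_right _ _)))
  set m' : Fin d → ℝ := fun j => m j + ε/2 with hm'
  have hm'M : m' ∈ M := by
    apply hball
    rw [Metric.mem_ball, dist_pi_lt_iff hε]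
    intro j
    simp only [hm', Real.dist_eq]
    rw [add_sub_cancel_left, abs_of_nonneg (by positivity)]
    linarith
  refine hdown m' hm'M w hwQ (fun j => ?_)
  have h1 : dist (w j) (z j) < ε/2 :=
    lt_of_le_of_lt (dist_le_pi_dist w z j) (lt_of_lt_of_le hw (min_le_left _ _))
  have := hle j
  rw [Real.dist_eq, abs_lt] at h1
  simp only [hm']
  linarith [h1.1, h1.2]

theorem strictMConvex_of_strictConvex_downward_closed (d : ℕ) (M : Set (Fin d → ℝ))
    (hM : M ⊆ Quadrant d) (hconv : StrictConvex ℝ M)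
    (hdown : ∀ y ∈ M, ∀ x ∈ Quadrant d, (∀ j, x j ≤ y j) → x ∈ M) :
    StrictConvex ℝ (Log d '' M) := by
  intro u hu v hv huv a b ha hb hab
  obtain ⟨x, hxM, hx⟩ := hu
  obtain ⟨y, hyM, hy⟩ := hv
  have hxQ := hM hxM
  have hyQ := hM hyM
  have hxy : x ≠ y := fun h => huv (by rw [← hx, ← hy, h])
  -- the interior point of M
  have hmem : a • x + b • y ∈ interior M := hconv hxM hyM hxy ha hb hab
  set Exp : (Fin d → ℝ) → (Fin d → ℝ) := fun w j => Real.exp (w j) with hExp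
  have hExpCont : Continuous Exp :=
    continuous_pi fun j => Real.continuous_exp.comp (continuous_apply j)
  set z := Exp (a • u + b • v) with hzdef
  have hzQ : z ∈ Quadrant d := fun j => Real.exp_pos _
  have hzle : ∀ j, z j ≤ (a • x + b • y) j := by
    intro j
    have hxj := hxQ j
    have hyj := hyQ j
    have hz : z j = (x j) ^ a * (y j) ^ b := by
      simp only [hzdef, hExp, Pi.add_apply, Pi.smul_apply, smul_eq_mul, ← hx, ← hy, Log,
        Real.exp_add]
      rw [Real.rpow_def_of_pos hxj, Real.rpow_def_of_pos hyj, mul_comm (Real.log (x j)),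
        mul_comm (Real.log (y j))]
    rw [hz]
    have := Real.geom_mean_le_arith_mean2_weighted ha.le hb.le hxj.le hyj.le hab
    simpa using this
  have hzint : z ∈ interior M := mem_interior_of_le d M hdown hmem hzQ hzle
  -- transfer through Exp
  have hsub : Exp ⁻¹' M ⊆ Log d '' M := by
    intro w hw
    exact ⟨Exp w, hw, funext fun j => Real.log_exp (w j)⟩
  have : a • u + b • v ∈ interior (Exp ⁻¹' M) :=
    preimage_interior_subset_interior_preimage hExpCont hzint
  exact interior_mono hsub this
end
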